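/- arXiv:2202.06161 — 4 statements merged into one kernel-verified Lean document; each statement's English description precedes it below -/
import Mathlib

section
/- Let c : ℝ → S^{n-1} ⊂ ℝⁿ be a smooth periodic curve with period P > 0 such that for every unit vector m ∈ S^{n-1} there exists s with ⟪c(s), m⟫ = 0 (i.e., c meets every equatorial subsphere). Then the length of c over one period, ∫₀ᴾ ‖c'(t)‖ dt, is at least 2π. -/
open scoped InnerProductSpace Real

/-- `P` is the least positive period of `x`. -/
def IsLeastPeriod {α : Type*} (x : ℝ → α) (P : ℝ) : Prop :=
  0 < P ∧ Function.Periodic x P ∧ ∀ T, 0 < T → Function.Periodic x T → P ≤ T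


open intervalIntegral

lemma orth_aux {n : ℕ} (c : ℝ → EuclideanSpace ℝ (Fin n))
    (hc : ContDiff ℝ (⊤ : ℕ∞) c) (hsphere : ∀ t, ‖c t‖ = 1) (t : ℝ) :
    ⟪c t, deriv c t⟫_ℝ = 0 := by
  have hder : ∀ u, HasDerivAt c (deriv c u) u := fun u =>
    ((hc.differentiable (by simp)) u).hasDerivAt
  have h1 : HasDerivAt (fun u => ⟪c u, c u⟫_ℝ)
      (⟪c t, deriv c t⟫_ℝ + ⟪deriv c t, c t⟫_ℝ) t :=
    (hder t).inner ℝ (hder t)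
  have h2 : (fun u => ⟪c u, c u⟫_ℝ) = fun _ => (1:ℝ) := by
    funext u
    rw [real_inner_self_eq_norm_sq, hsphere u]; norm_num
  rw [h2] at h1
  have := h1.unique (hasDerivAt_const t 1)
  have hcomm := real_inner_comm (c t) (deriv c t)
  linarith

lemma key_aux {n : ℕ} (c : ℝ → EuclideanSpace ℝ (Fin n))
    (hc : ContDiff ℝ (⊤ : ℕ∞) c) (hsphere : ∀ t, ‖c t‖ = 1)
    (v : EuclideanSpace ℝ (Fin n)) (hv : ‖v‖ = 1) (a b : ℝ) (hab : a ≤ b) :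
    |Real.arccos ⟪c b, v⟫_ℝ - Real.arccos ⟪c a, v⟫_ℝ| ≤ ∫ t in a..b, ‖deriv c t‖ := by
  have hder : ∀ u, HasDerivAt c (deriv c u) u := fun u =>
    ((hc.differentiable (by simp)) u).hasDerivAt
  have hg : ∀ t, HasDerivAt (fun u => ⟪c u, v⟫_ℝ) ⟪deriv c t, v⟫_ℝ t := fun t => by
    simpa using (hder t).inner ℝ (hasDerivAt_const t v)
  have habs : ∀ t, |⟪c t, v⟫_ℝ| ≤ 1 := fun t => by
    calc |⟪c t, v⟫_ℝ| ≤ ‖c t‖ * ‖v‖ := abs_real_inner_le_norm _ _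
    _ = 1 := by rw [hsphere, hv]; ring
  have hGbound : ∀ t, |⟪deriv c t, v⟫_ℝ| ≤ ‖deriv c t‖ * Real.sqrt (1 - ⟪c t, v⟫_ℝ^2) := by
    intro t
    have hw : ‖v - ⟪c t, v⟫_ℝ • c t‖ = Real.sqrt (1 - ⟪c t, v⟫_ℝ^2) := by
      rw [← Real.sqrt_sq (norm_nonneg (v - ⟪c t, v⟫_ℝ • c t))]
      congr 1
      rw [norm_sub_sq_real, norm_smul, hv, hsphere]
      rw [real_inner_smul_right, real_inner_comm v (c t)]
      simp [abs_mul_abs_self]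
      ring
    have h0 : ⟪deriv c t, c t⟫_ℝ = 0 := by
      rw [real_inner_comm]; exact orth_aux c hc hsphere t
    have heq : ⟪deriv c t, v⟫_ℝ = ⟪deriv c t, v - ⟪c t, v⟫_ℝ • c t⟫_ℝ := by
      rw [inner_sub_right, real_inner_smul_right, h0]
      ring
    rw [heq]
    calc |⟪deriv c t, v - ⟪c t, v⟫_ℝ • c t⟫_ℝ| ≤ ‖deriv c t‖ * ‖v - ⟪c t, v⟫_ℝ • c t‖ :=
          abs_real_inner_le_norm _ _
    _ = _ := by rw [hw]
  have main : ∀ r : ℝ, 0 < r → r < 1 →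
      |Real.arccos (r * ⟪c b, v⟫_ℝ) - Real.arccos (r * ⟪c a, v⟫_ℝ)| ≤
        ∫ t in a..b, ‖deriv c t‖ := by
    intro r hr0 hr1
    set ψ' : ℝ → ℝ := fun t =>
      -(1 / Real.sqrt (1 - (r * ⟪c t, v⟫_ℝ)^2)) * (r * ⟪deriv c t, v⟫_ℝ) with hψ'def
    have hrg : ∀ t, |r * ⟪c t, v⟫_ℝ| < 1 := fun t => by
      have h1 : |r * ⟪c t, v⟫_ℝ| = r * |⟪c t, v⟫_ℝ| := by rw [abs_mul, abs_of_pos hr0]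
      nlinarith [habs t, abs_nonneg ⟪c t, v⟫_ℝ]
    have hsqpos : ∀ t, 0 < 1 - (r * ⟪c t, v⟫_ℝ)^2 := fun t => by
      nlinarith [hrg t, sq_abs (r * ⟪c t, v⟫_ℝ), abs_nonneg (r * ⟪c t, v⟫_ℝ)]
    have hApos : ∀ t, 0 < Real.sqrt (1 - (r * ⟪c t, v⟫_ℝ)^2) := fun t =>
      Real.sqrt_pos.2 (hsqpos t)
    have hψ : ∀ t, HasDerivAt (fun u => Real.arccos (r * ⟪c u, v⟫_ℝ)) (ψ' t) t := by
      intro t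
      have h1 : HasDerivAt (fun u => r * ⟪c u, v⟫_ℝ) (r * ⟪deriv c t, v⟫_ℝ) t :=
        (hg t).const_mul r
      have hne1 : r * ⟪c t, v⟫_ℝ ≠ -1 := by
        intro h; have := hrg t; rw [h] at this; simp at this
      have hne2 : r * ⟪c t, v⟫_ℝ ≠ 1 := by
        intro h; have := hrg t; rw [h] at this; simp at this
      exact HasDerivAt.comp (h₂ := Real.arccos) (h := fun u => r * ⟪c u, v⟫_ℝ) t ((Real.hasStrictDerivAt_arccos hne1 hne2).hasDerivAt) h1
    have hbd : ∀ t, |ψ' t| ≤ ‖deriv c t‖ := by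
      intro t
      have hA := hApos t
      have h3 : r * Real.sqrt (1 - ⟪c t, v⟫_ℝ^2) ≤ Real.sqrt (1 - (r * ⟪c t, v⟫_ℝ)^2) := by
        have hrs : r * Real.sqrt (1 - ⟪c t, v⟫_ℝ^2) =
            Real.sqrt (r^2 * (1 - ⟪c t, v⟫_ℝ^2)) := by
          rw [Real.sqrt_mul (by positivity), Real.sqrt_sq hr0.le]
        rw [hrs]
        apply Real.sqrt_le_sqrt
        nlinarith [sq_nonneg ⟪c t, v⟫_ℝ]
      have habseq : |ψ' t| = (1 / Real.sqrt (1 - (r * ⟪c t, v⟫_ℝ)^2)) *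
          (r * |⟪deriv c t, v⟫_ℝ|) := by
        rw [hψ'def, abs_mul, abs_neg, abs_mul, abs_of_pos hr0,
          abs_of_pos (by positivity : (0:ℝ) < 1 / Real.sqrt (1 - (r * ⟪c t, v⟫_ℝ)^2))]
      rw [habseq, one_div, inv_mul_le_iff₀ hA]
      calc r * |⟪deriv c t, v⟫_ℝ| ≤ r * (‖deriv c t‖ * Real.sqrt (1 - ⟪c t, v⟫_ℝ^2)) :=
            mul_le_mul_of_nonneg_left (hGbound t) hr0.le
      _ = (r * Real.sqrt (1 - ⟪c t, v⟫_ℝ^2)) * ‖deriv c t‖ := by ring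
      _ ≤ Real.sqrt (1 - (r * ⟪c t, v⟫_ℝ)^2) * ‖deriv c t‖ :=
            mul_le_mul_of_nonneg_right h3 (norm_nonneg _)
    have hdc : Continuous (deriv c) := hc.continuous_deriv (by simp)
    have hgc : Continuous fun t => ⟪c t, v⟫_ℝ := hc.continuous.inner continuous_const
    have hGc : Continuous fun t => ⟪deriv c t, v⟫_ℝ := hdc.inner continuous_const
    have hcont : Continuous ψ' := by
      apply Continuous.mul
      · apply Continuous.neg
        apply Continuous.div continuous_const
        · exact Real.continuous_sqrt.comp (by fun_prop)
        · intro t; exact (hApos t).ne'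
      · exact continuous_const.mul hGc
    have hint : IntervalIntegrable ψ' MeasureTheory.volume a b := hcont.intervalIntegrable a b
    have heq := integral_eq_sub_of_hasDerivAt
      (f := fun u => Real.arccos (r * ⟪c u, v⟫_ℝ)) (f' := ψ') (fun t _ => hψ t) hint
    rw [← heq]
    calc |∫ t in a..b, ψ' t| ≤ ∫ t in a..b, |ψ' t| := abs_integral_le_integral_abs hab
    _ ≤ ∫ t in a..b, ‖deriv c t‖ := integral_mono_on hab (hcont.abs.intervalIntegrable a b)
          (hdc.norm.intervalIntegrable a b) (fun t _ => hbd t)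
  have hcF : Continuous fun r : ℝ =>
      |Real.arccos (r * ⟪c b, v⟫_ℝ) - Real.arccos (r * ⟪c a, v⟫_ℝ)| := by
    apply Continuous.abs
    exact (Real.continuous_arccos.comp (continuous_id.mul continuous_const)).sub
      (Real.continuous_arccos.comp (continuous_id.mul continuous_const))
  have hnb : (nhdsWithin (1:ℝ) (Set.Ioo 0 1)).NeBot := by
    apply mem_closure_iff_nhdsWithin_neBot.1
    rw [closure_Ioo (by norm_num : (0:ℝ) ≠ 1)]
    exact Set.right_mem_Icc.2 (by norm_num)
  have htend := (hcF.tendsto 1).mono_left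
    (nhdsWithin_le_nhds (s := Set.Ioo (0:ℝ) 1))
  have hev : ∀ᶠ r in nhdsWithin (1:ℝ) (Set.Ioo 0 1),
      |Real.arccos (r * ⟪c b, v⟫_ℝ) - Real.arccos (r * ⟪c a, v⟫_ℝ)| ≤
        ∫ t in a..b, ‖deriv c t‖ :=
    Filter.eventually_of_mem self_mem_nhdsWithin (fun r hr => main r hr.1 hr.2)
  have := le_of_tendsto htend hev
  simpa using this

/-- A closed curve on the unit sphere meeting every equatorial subsphere has
length at least `2π` over one period. -/
theorem stmt1 {n : ℕ} (c : ℝ → EuclideanSpace ℝ (Fin n))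
    (hc : ContDiff ℝ (⊤ : ℕ∞) c)
    (hsphere : ∀ t, ‖c t‖ = 1)
    (P : ℝ) (hP : IsLeastPeriod c P)
    (hmeet : ∀ m : EuclideanSpace ℝ (Fin n), ‖m‖ = 1 → ∃ s : ℝ, ⟪c s, m⟫_ℝ = 0) :
    2 * π ≤ ∫ t in (0:ℝ)..P, ‖deriv c t‖ := by
  obtain ⟨hPpos, hper, -⟩ := hP
  by_contra hcon
  push_neg at hcon
  have hdc : Continuous (deriv c) := hc.continuous_deriv (by simp)
  have hint : ∀ a b : ℝ, IntervalIntegrable (fun t => ‖deriv c t‖) MeasureTheory.volume a b :=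
    fun a b => hdc.norm.intervalIntegrable a b
  set s : ℝ → ℝ := fun t => ∫ u in (0:ℝ)..t, ‖deriv c u‖ with hsdef
  have hscont : Continuous s := intervalIntegral.continuous_primitive hint 0
  have hL2π : s P < 2 * π := hcon
  have hadd : ∀ a b : ℝ, s b - s a = ∫ u in a..b, ‖deriv c u‖ := by
    intro a b
    have h := integral_add_adjacent_intervals (hint 0 a) (hint a b)
    simp only [hsdef]
    linarith
  have hs0 : s 0 = 0 := integral_same
  have hmono : ∀ a b : ℝ, a ≤ b → s a ≤ s b := by
    intro a b hab
    have h := hadd a b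
    have h2 : 0 ≤ ∫ u in a..b, ‖deriv c u‖ :=
      intervalIntegral.integral_nonneg hab (fun u _ => norm_nonneg _)
    linarith
  have hL0 : 0 ≤ s P := by have := hmono 0 P hPpos.le; linarith
  have hmem : s P / 2 ∈ Set.Icc (s 0) (s P) := by
    constructor
    · rw [hs0]; linarith
    · linarith
  obtain ⟨t₀, ht₀mem, ht₀⟩ := intermediate_value_Icc hPpos.le hscont.continuousOn hmem
  have hkey := key_aux c hc hsphere
  have hself : ∀ t, ⟪c t, c t⟫_ℝ = 1 := fun t => by
    rw [real_inner_self_eq_norm_sq, hsphere]; norm_num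
  have harc0 : ∀ t, Real.arccos ⟪c t, c t⟫_ℝ = 0 := fun t => by
    rw [hself, Real.arccos_one]
  have hdist : ∀ a b : ℝ, a ≤ b → Real.arccos ⟪c b, c a⟫_ℝ ≤ s b - s a := by
    intro a b hab
    calc Real.arccos ⟪c b, c a⟫_ℝ
        = |Real.arccos ⟪c b, c a⟫_ℝ - Real.arccos ⟪c a, c a⟫_ℝ| := by
          rw [harc0, sub_zero, abs_of_nonneg (Real.arccos_nonneg _)]
    _ ≤ ∫ t in a..b, ‖deriv c t‖ := hkey (c a) (hsphere a) a b hab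
    _ = s b - s a := (hadd a b).symm
  have hdist2 : ∀ a b : ℝ, a ≤ b → Real.arccos ⟪c a, c b⟫_ℝ ≤ s b - s a := by
    intro a b hab
    calc Real.arccos ⟪c a, c b⟫_ℝ
        = |Real.arccos ⟪c b, c b⟫_ℝ - Real.arccos ⟪c a, c b⟫_ℝ| := by
          rw [harc0]
          rw [zero_sub, abs_neg, abs_of_nonneg (Real.arccos_nonneg _)]
    _ ≤ ∫ t in a..b, ‖deriv c t‖ := hkey (c b) (hsphere b) a b hab
    _ = s b - s a := (hadd a b).symm
  have hLhalf : s P / 2 < π := by linarith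
  have hdpq : Real.arccos ⟪c t₀, c 0⟫_ℝ ≤ s P / 2 := by
    have := hdist 0 t₀ ht₀mem.1
    rw [hs0, ht₀] at this
    linarith
  have hpq : c 0 + c t₀ ≠ 0 := by
    intro h
    have hq : c t₀ = -(c 0) := eq_neg_of_add_eq_zero_right h
    rw [hq] at hdpq
    rw [inner_neg_left, hself, Real.arccos_neg, Real.arccos_one] at hdpq
    simp at hdpq
    linarith
  have hnpq : 0 < ‖c 0 + c t₀‖ := norm_pos_iff.2 hpq
  have hm1 : ‖(‖c 0 + c t₀‖⁻¹ • (c 0 + c t₀) : EuclideanSpace ℝ (Fin n))‖ = 1 := by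
    rw [norm_smul, norm_inv, norm_norm]
    field_simp
  obtain ⟨s₀, hs₀⟩ := hmeet _ hm1
  have hinner0 : ⟪c s₀, c 0⟫_ℝ + ⟪c s₀, c t₀⟫_ℝ = 0 := by
    rw [real_inner_smul_right] at hs₀
    rcases mul_eq_zero.1 hs₀ with h | h
    · exact absurd h (inv_ne_zero hnpq.ne')
    · rw [← inner_add_right]; exact h
  obtain ⟨s₁, hs₁mem, hcs⟩ := hper.exists_mem_Ico hPpos s₀ 0
  rw [zero_add] at hs₁mem
  have hx0 : ⟪c s₁, c 0⟫_ℝ + ⟪c s₁, c t₀⟫_ℝ = 0 := by rw [← hcs]; exact hinner0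
  have hcP : c P = c 0 := by have := hper 0; rw [zero_add] at this; exact this
  rcases le_total s₁ t₀ with hcase | hcase
  · have h1 : Real.arccos ⟪c s₁, c 0⟫_ℝ ≤ s s₁ - s 0 := hdist 0 s₁ hs₁mem.1
    have h2 : Real.arccos ⟪c s₁, c t₀⟫_ℝ ≤ s t₀ - s s₁ := hdist2 s₁ t₀ hcase
    have h3 : ⟪c s₁, c t₀⟫_ℝ = -⟪c s₁, c 0⟫_ℝ := by linarith
    rw [h3, Real.arccos_neg] at h2
    rw [hs0] at h1
    rw [ht₀] at h2
    linarith
  · have h1 : Real.arccos ⟪c s₁, c t₀⟫_ℝ ≤ s s₁ - s t₀ := hdist t₀ s₁ hcase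
    have h2 : Real.arccos ⟪c s₁, c P⟫_ℝ ≤ s P - s s₁ := hdist2 s₁ P hs₁mem.2.le
    rw [hcP] at h2
    have h3 : ⟪c s₁, c t₀⟫_ℝ = -⟪c s₁, c 0⟫_ℝ := by linarith
    rw [h3, Real.arccos_neg] at h1
    rw [ht₀] at h1
    linarith
end

section
/- Any smooth closed curve on the unit sphere S^{n-1} of length strictly less than 2π is contained in some open hemisphere H_m = {v ∈ S^{n-1} : ⟪v, m⟫ > 0}. -/
set_option maxHeartbeats 1000000
open Set intervalIntegral MeasureTheory


open scoped InnerProductSpace Real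

private lemma quar1 (L ε Δ : ℝ) (hL : 0 ≤ L) (hε : 0 ≤ ε) (hΔ : 0 ≤ Δ) :
    ε ^ 2 * Δ ^ 2 ≤ (L + ε * Δ) ^ 2 - L ^ 2 := by
  nlinarith [mul_nonneg hL (mul_nonneg hε hΔ)]

private lemma quar2 (K Δ ε : ℝ) (hK : 0 < K) (hΔ : 0 ≤ Δ) (h : Δ * (2 * K ^ 2) ≤ ε) :
    (K * Δ) ^ 4 * (5 / 96) ≤ ε ^ 2 * Δ ^ 2 / 2 := by
  have h5 : 0 ≤ Δ * (2 * K ^ 2) := by positivity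
  have h4 : (Δ * (2 * K ^ 2)) ^ 2 ≤ ε ^ 2 := pow_le_pow_left₀ h5 h 2
  nlinarith [sq_nonneg Δ, sq_nonneg (K * Δ), sq_nonneg (K * Δ * Δ)]

private lemma arccos_le_of_cos_le {x g : ℝ} (hx0 : 0 ≤ x) (hxpi : x ≤ π) (h : Real.cos x ≤ g) :
    Real.arccos g ≤ x := by
  have h2 : Real.arcsin (Real.cos x) ≤ Real.arcsin g := Real.monotone_arcsin h
  have h3 : Real.arccos g ≤ Real.arccos (Real.cos x) := by unfold Real.arccos; linarith
  simpa [Real.arccos_cos hx0 hxpi] using h3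

lemma length_ge_arccos {n : ℕ} {c : ℝ → EuclideanSpace ℝ (Fin n)}
    (hc : ContDiff ℝ (⊤ : ℕ∞) c) (hs : ∀ t, ‖c t‖ = 1) {a b : ℝ} (hab : a ≤ b) :
    Real.arccos ⟪c a, c b⟫_ℝ ≤ ∫ t in a..b, ‖deriv c t‖ := by
  have hdiff : Differentiable ℝ c := hc.differentiable (by simp)
  have hd : ∀ t, HasDerivAt c (deriv c t) t := fun t => (hdiff t).hasDerivAt
  have hcont' : Continuous (deriv c) := hc.continuous_deriv (by simp)
  have hnorm : Continuous fun t => ‖deriv c t‖ := hcont'.norm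
  have hInt : ∀ x y : ℝ, IntervalIntegrable (fun t => ‖deriv c t‖) volume x y :=
    fun x y => hnorm.intervalIntegrable x y
  -- orthogonality
  have orth : ∀ t, ⟪c t, deriv c t⟫_ℝ = 0 := by
    intro t
    have h1 : HasDerivAt (fun u => ⟪c u, c u⟫_ℝ) (⟪c t, deriv c t⟫_ℝ + ⟪deriv c t, c t⟫_ℝ) t :=
      (hd t).inner ℝ (hd t)
    have h2 : (fun u => ⟪c u, c u⟫_ℝ) = fun _ => (1:ℝ) := by
      funext u; rw [real_inner_self_eq_norm_sq, hs u]; norm_num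
    rw [h2] at h1
    have h3 := h1.unique (hasDerivAt_const t (1:ℝ))
    have hcm : ⟪c t, deriv c t⟫_ℝ = ⟪deriv c t, c t⟫_ℝ := real_inner_comm _ _
    linarith
  set g : ℝ → ℝ := fun t => ⟪c t, c a⟫_ℝ with hgdef
  have hgabs : ∀ t, |g t| ≤ 1 := by
    intro t
    have := abs_real_inner_le_norm (c t) (c a)
    simpa [hs] using this
  have hgd : ∀ t, HasDerivAt g ⟪deriv c t, c a⟫_ℝ t := by
    intro t; simpa using (hd t).inner ℝ (hasDerivAt_const t (c a))
  have key : ∀ t, |⟪deriv c t, c a⟫_ℝ| ≤ ‖deriv c t‖ * Real.sqrt (1 - g t ^ 2) := by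
    intro t
    set w : EuclideanSpace ℝ (Fin n) := c a - g t • c t with hw
    have hwnorm : ‖w‖ = Real.sqrt (1 - g t ^ 2) := by
      have h1 : ‖w‖ ^ 2 = 1 - g t ^ 2 := by
        have hcomm : ⟪c a, c t⟫_ℝ = g t := real_inner_comm (c a) (c t) ▸ rfl
        rw [hw, norm_sub_sq_real, real_inner_smul_right, hcomm, norm_smul, hs, hs]
        rw [Real.norm_eq_abs]
        rw [mul_pow, sq_abs]
        ring
      rw [← h1, Real.sqrt_sq (norm_nonneg _)]
    have h2 : ⟪deriv c t, c a⟫_ℝ = ⟪deriv c t, w⟫_ℝ := by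
      rw [hw, inner_sub_right, real_inner_smul_right,
        show ⟪deriv c t, c t⟫_ℝ = ⟪c t, deriv c t⟫_ℝ from real_inner_comm _ _, orth t]
      ring
    rw [h2, ← hwnorm]
    exact abs_real_inner_le_norm _ _
  set L : ℝ → ℝ := fun t => ∫ u in a..t, ‖deriv c u‖ with hL
  have hLd : ∀ t, HasDerivAt L ‖deriv c t‖ t :=
    fun t => (hnorm.integral_hasStrictDerivAt a t).hasDerivAt
  have hLcont : Continuous L :=
    continuous_iff_continuousAt.mpr fun t => (hLd t).continuousAt
  have hgcont : Continuous g := hc.continuous.inner continuous_const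
  have hLmono : ∀ x y : ℝ, x ≤ y → L x ≤ L y := by
    intro x y hxy
    have hadd := intervalIntegral.integral_add_adjacent_intervals (hInt a x) (hInt x y)
    have h0 : 0 ≤ ∫ u in x..y, ‖deriv c u‖ :=
      intervalIntegral.integral_nonneg hxy fun u _ => norm_nonneg _
    simp only [hL]
    linarith [hadd]
  have hLa : L a = 0 := by simp [hL]
  have hLnonneg : ∀ t, a ≤ t → 0 ≤ L t := fun t ht => hLa ▸ hLmono a t ht
  have hga : g a = 1 := by
    simp only [hgdef, real_inner_self_eq_norm_sq, hs]; norm_num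
  have main : ∀ ε : ℝ, 0 < ε → Real.arccos (g b) ≤ L b + ε * (b - a) := by
    intro ε hε
    by_contra hcon
    push_neg at hcon
    set D : ℝ → ℝ := fun t => Real.arccos (g t) - (L t + ε * (t - a)) with hD
    have hDb : 0 < D b := by simp only [hD]; linarith
    have hDa : D a = 0 := by simp [hD, hLa, hga, Real.arccos_one]
    have hDcont : Continuous D :=
      (Real.continuous_arccos.comp hgcont).sub
        (hLcont.add (continuous_const.mul (continuous_id.sub continuous_const)))
    set S : Set ℝ := Icc a b ∩ {t | D t ≤ 0} with hS
    have hSne : S.Nonempty := ⟨a, ⟨le_refl a, hab⟩, by simp [hDa]⟩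
    have hSbdd : BddAbove S := ⟨b, fun x hx => hx.1.2⟩
    have hSclosed : IsClosed S := isClosed_Icc.inter (isClosed_le hDcont continuous_const)
    set t₀ := sSup S with ht₀def
    have ht₀S : t₀ ∈ S := hSclosed.csSup_mem hSne hSbdd
    have ht₀ab : t₀ ∈ Icc a b := ht₀S.1
    have ht₀b : t₀ < b := by
      rcases lt_or_eq_of_le ht₀ab.2 with h | h
      · exact h
      · exfalso; rw [h] at ht₀S; exact absurd hDb (not_lt.mpr ht₀S.2)
    have hpos : ∀ u, t₀ < u → u ≤ b → 0 < D u := by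
      intro u h1 h2
      by_contra hle
      push_neg at hle
      have : u ∈ S := ⟨⟨le_trans ht₀ab.1 h1.le, h2⟩, hle⟩
      exact absurd (le_csSup hSbdd this) (not_le.mpr h1)
    have hD0 : D t₀ = 0 := by
      have htd : Filter.Tendsto D (nhdsWithin t₀ (Ioi t₀)) (nhds (D t₀)) :=
        (hDcont.tendsto t₀).mono_left nhdsWithin_le_nhds
      have hev : ∀ᶠ u in nhdsWithin t₀ (Ioi t₀), 0 ≤ D u := by
        filter_upwards [Ioc_mem_nhdsGT_of_mem ⟨le_refl t₀, ht₀b⟩] with u hu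
        exact (hpos u hu.1 hu.2).le
      have hge := ge_of_tendsto htd hev
      have hupper : D t₀ ≤ 0 := ht₀S.2
      linarith
    have harc : Real.arccos (g t₀) = L t₀ + ε * (t₀ - a) := by
      simp only [hD] at hD0; linarith
    by_cases hgm1 : g t₀ = -1
    · have hπ : L t₀ + ε * (t₀ - a) = π := by rw [← harc, hgm1, Real.arccos_neg_one]
      have h1 : Real.arccos (g b) ≤ π := Real.arccos_le_pi _
      have h2 : L t₀ ≤ L b := hLmono t₀ b ht₀b.le
      have hb' : D b < 0 := by
        simp only [hD]
        linarith [mul_pos hε (sub_pos.mpr ht₀b)]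
      linarith [hDb]
    by_cases hg1 : g t₀ = 1
    · -- quartic case : t₀ = a
      have hθ0 : Real.arccos (g t₀) = 0 := by rw [hg1, Real.arccos_one]
      have hta : t₀ = a := by
        have h1 : 0 ≤ L t₀ := hLnonneg t₀ ht₀ab.1
        have h2 : 0 ≤ ε * (t₀ - a) := mul_nonneg hε.le (by linarith [ht₀ab.1])
        have h3 : ε * (t₀ - a) = 0 := by linarith [harc]
        rcases mul_eq_zero.mp h3 with h | h
        · exact absurd h (ne_of_gt hε)
        · linarith
      have hab' : a < b := hta ▸ ht₀b
      obtain ⟨M, hM⟩ := isCompact_Icc.exists_bound_of_continuousOn (s := Icc a b)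
        hnorm.continuousOn
      have hM' : ∀ x ∈ Icc a b, ‖deriv c x‖ ≤ M := fun x hx =>
        le_trans (le_abs_self _) (by simpa [Real.norm_eq_abs] using hM x hx)
      set K := M + ε with hK
      have hM0 : 0 ≤ M := le_trans (norm_nonneg _) (hM' a ⟨le_refl a, hab⟩)
      have hK0 : 0 < K := by simp only [hK]; linarith
      set δ := min (1 / K) (ε / (2 * K ^ 2)) with hδ
      have hδ0 : 0 < δ := lt_min (by positivity) (by positivity)
      set u := min (a + δ) b with hu
      have hau : a < u := lt_min (by linarith) hab'
      have hub : u ≤ b := min_le_right _ _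
      have hDu : 0 < D u := hpos u (by rw [hta]; exact hau) hub
      set Δ := u - a with hΔdef
      have hΔ0 : 0 < Δ := by simp only [hΔdef]; linarith
      have hΔδ : Δ ≤ δ := by
        simp only [hΔdef]
        have := min_le_left (a + δ) b
        simp only [hu] at *
        linarith [this]
      have hLuM : L u ≤ M * Δ := by
        have h1 : (∫ t in a..u, ‖deriv c t‖) ≤ ∫ t in a..u, M :=
          intervalIntegral.integral_mono_on hau.le (hInt a u) intervalIntegrable_const
            (fun x hx => hM' x ⟨hx.1, le_trans hx.2 hub⟩)
        have h2 : (∫ t in a..u, M) = M * Δ := by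
          rw [intervalIntegral.integral_const, smul_eq_mul, hΔdef]; ring
        simp only [hL]; linarith
      have hLu0 : 0 ≤ L u := hLnonneg u hau.le
      have hchord : ‖c u - c a‖ ≤ L u := by
        have hftc : (∫ t in a..u, deriv c t) = c u - c a :=
          intervalIntegral.integral_deriv_eq_sub (fun x _ => hdiff x)
            (hcont'.intervalIntegrable a u)
        rw [← hftc]
        exact intervalIntegral.norm_integral_le_integral_norm hau.le
      have hgu : 1 - L u ^ 2 / 2 ≤ g u := by
        have h1 : ‖c u - c a‖ ^ 2 = 2 - 2 * g u := by
          rw [norm_sub_sq_real, hs, hs]; simp only [hgdef]; ring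
        have h2 : ‖c u - c a‖ ^ 2 ≤ L u ^ 2 := pow_le_pow_left₀ (norm_nonneg _) hchord 2
        linarith
      set X := L u + ε * Δ with hX
      have hX0 : 0 < X := by
        rw [hX]; linarith [mul_pos hε hΔ0]
      have hXK : X ≤ K * Δ := by
        rw [hX]
        have : K * Δ = M * Δ + ε * Δ := by rw [hK]; ring
        linarith [mul_le_mul_of_nonneg_right (le_refl M) hΔ0.le, hLuM]
      have hX1 : X ≤ 1 := by
        have h1 : K * Δ ≤ K * δ := mul_le_mul_of_nonneg_left hΔδ hK0.le
        have h2 : δ ≤ 1 / K := min_le_left _ _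
        have h3 : K * δ ≤ K * (1 / K) := mul_le_mul_of_nonneg_left h2 hK0.le
        rw [mul_one_div, div_self (ne_of_gt hK0)] at h3
        linarith
      have hcosb := Real.cos_bound (x := X) (by rw [abs_of_pos hX0]; exact hX1)
      rw [abs_of_pos hX0] at hcosb
      have hcosX : Real.cos X ≤ 1 - X ^ 2 / 2 + X ^ 4 * (5 / 96) := by
        have := abs_le.mp hcosb
        linarith [this.2]
      have hΔ2 : Δ ≤ ε / (2 * K ^ 2) := le_trans hΔδ (min_le_right _ _)
      have hΔ2' : Δ * (2 * K ^ 2) ≤ ε := (le_div_iff₀ (by positivity)).mp hΔ2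
      have hcosle : Real.cos X ≤ g u := by
        have e1 : ε ^ 2 * Δ ^ 2 ≤ X ^ 2 - L u ^ 2 := by
          rw [hX]; exact quar1 (L u) ε Δ hLu0 hε.le hΔ0.le
        have e2 : X ^ 4 ≤ (K * Δ) ^ 4 := pow_le_pow_left₀ hX0.le hXK 4
        have e3 : (K * Δ) ^ 4 * (5 / 96) ≤ ε ^ 2 * Δ ^ 2 / 2 :=
          quar2 K Δ ε hK0 hΔ0.le hΔ2'
        clear_value X Δ u δ K L
        have hc1 : X ^ 4 * (5 / 96) ≤ (K * Δ) ^ 4 * (5 / 96) :=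
          mul_le_mul_of_nonneg_right e2 (by norm_num)
        linarith [hgu, hcosX, e1, hc1, e3]
      have hXpi : X ≤ π := le_trans hX1 (by linarith [Real.pi_gt_three])
      have harcu : Real.arccos (g u) ≤ X := arccos_le_of_cos_le hX0.le hXpi hcosle
      have hDu' : D u ≤ 0 := by
        rw [hX, hΔdef] at harcu
        simp only [hD]
        linarith
      linarith
    · -- interior case
      have h1 : -1 ≤ g t₀ := (abs_le.mp (hgabs t₀)).1
      have h2 : g t₀ ≤ 1 := (abs_le.mp (hgabs t₀)).2
      have h1' : -1 < g t₀ := lt_of_le_of_ne h1 (fun h => hgm1 h.symm)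
      have h2' : g t₀ < 1 := lt_of_le_of_ne h2 hg1
      have hsq : 0 < 1 - g t₀ ^ 2 := by nlinarith
      set s := Real.sqrt (1 - g t₀ ^ 2) with hsdef
      have hspos : 0 < s := Real.sqrt_pos.mpr hsq
      have harccos' : HasDerivAt Real.arccos (-(1 / s)) (g t₀) :=
        Real.hasDerivAt_arccos hgm1 hg1
      have hθd : HasDerivAt (fun t => Real.arccos (g t)) (-(1 / s) * ⟪deriv c t₀, c a⟫_ℝ) t₀ :=
        harccos'.comp t₀ (hgd t₀)
      have hXd : HasDerivAt (fun t => L t + ε * (t - a)) (‖deriv c t₀‖ + ε * 1) t₀ :=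
        (hLd t₀).add (((hasDerivAt_id t₀).sub_const a).const_mul ε)
      have hDd : HasDerivAt D
          (-(1 / s) * ⟪deriv c t₀, c a⟫_ℝ - (‖deriv c t₀‖ + ε * 1)) t₀ := hθd.sub hXd
      have hdneg : -(1 / s) * ⟪deriv c t₀, c a⟫_ℝ - (‖deriv c t₀‖ + ε * 1) < 0 := by
        have habs : -(1 / s) * ⟪deriv c t₀, c a⟫_ℝ ≤ (1 / s) * |⟪deriv c t₀, c a⟫_ℝ| := by
          have h3 := le_abs_self (-(1 / s) * ⟪deriv c t₀, c a⟫_ℝ)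
          rw [abs_mul, abs_neg, abs_of_pos (show (0:ℝ) < 1 / s by positivity)] at h3
          exact h3
        have h4 : (1 / s) * |⟪deriv c t₀, c a⟫_ℝ| ≤ ‖deriv c t₀‖ := by
          rw [div_mul_eq_mul_div, one_mul, div_le_iff₀ hspos]
          exact key t₀
        linarith
      have hslope := hasDerivAt_iff_tendsto_slope.mp hDd
      have hevneg : ∀ᶠ v in nhdsWithin t₀ {t₀}ᶜ, slope D t₀ v < 0 :=
        hslope.eventually_lt_const hdneg
      have hmono : nhdsWithin t₀ (Ioi t₀) ≤ nhdsWithin t₀ {t₀}ᶜ :=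
        nhdsWithin_mono t₀ (fun v hv => Set.mem_compl_singleton_iff.mpr (ne_of_gt hv))
      have hev2 : ∀ᶠ v in nhdsWithin t₀ (Ioi t₀), slope D t₀ v < 0 := hevneg.filter_mono hmono
      have hev3 : (Ioc t₀ b) ∈ nhdsWithin t₀ (Ioi t₀) :=
        Ioc_mem_nhdsGT_of_mem ⟨le_refl t₀, ht₀b⟩
      obtain ⟨v, hv1, hv2⟩ := (hev2.and hev3).exists
      have hDv := hpos v hv2.1 hv2.2
      rw [slope_def_field, hD0, sub_zero] at hv1
      have hvt : 0 < v - t₀ := by linarith [hv2.1]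
      have : 0 < D v / (v - t₀) := div_pos hDv hvt
      linarith
  rcases eq_or_lt_of_le hab with heq | hlt
  · subst heq
    have h1 : ⟪c a, c a⟫_ℝ = 1 := by rw [real_inner_self_eq_norm_sq, hs]; norm_num
    rw [h1, Real.arccos_one, intervalIntegral.integral_same]
  · have hfin : Real.arccos (g b) ≤ L b := by
      refine le_of_forall_pos_le_add fun ε hε => ?_
      have h := main (ε / (b - a)) (div_pos hε (sub_pos.mpr hlt))
      rw [div_mul_eq_mul_div, mul_div_assoc, div_self (sub_ne_zero.mpr hlt.ne'), mul_one] at h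
      linarith
    rw [show ⟪c a, c b⟫_ℝ = g b from real_inner_comm _ _]
    exact hfin

/-- A smooth closed curve on the unit sphere of length strictly less than `2π`
is contained in some open hemisphere. -/
theorem stmt2 {n : ℕ} (c : ℝ → EuclideanSpace ℝ (Fin n))
    (hc : ContDiff ℝ (⊤ : ℕ∞) c)
    (hsphere : ∀ t, ‖c t‖ = 1)
    (P : ℝ) (hP : IsLeastPeriod c P)
    (hlen : (∫ t in (0:ℝ)..P, ‖deriv c t‖) < 2 * π) :
    ∃ m : EuclideanSpace ℝ (Fin n), ‖m‖ = 1 ∧ ∀ t, 0 < ⟪c t, m⟫_ℝ := by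
  obtain ⟨hP0, hper, -⟩ := hP
  have hcont' : Continuous (deriv c) := hc.continuous_deriv (by simp)
  have hnorm : Continuous fun t => ‖deriv c t‖ := hcont'.norm
  have hInt : ∀ x y : ℝ, IntervalIntegrable (fun t => ‖deriv c t‖) volume x y :=
    fun x y => hnorm.intervalIntegrable x y
  have lenA : ∀ x y : ℝ, x ≤ y → Real.arccos ⟪c x, c y⟫_ℝ ≤ ∫ t in x..y, ‖deriv c t‖ :=
    fun x y h => length_ge_arccos hc hsphere h
  have hCS : ∀ x y : ℝ, |⟪c x, c y⟫_ℝ| ≤ 1 := by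
    intro x y
    have := abs_real_inner_le_norm (c x) (c y)
    simpa [hsphere] using this
  -- find the midpoint time s
  have hLnn : 0 ≤ ∫ t in (0:ℝ)..P, ‖deriv c t‖ :=
    intervalIntegral.integral_nonneg hP0.le fun u _ => norm_nonneg _
  have hivt : (∫ t in (0:ℝ)..P, ‖deriv c t‖) / 2 ∈
      (fun r => ∫ t in (0:ℝ)..r, ‖deriv c t‖) '' Icc 0 P := by
    apply intermediate_value_Icc hP0.le
    · exact (continuous_iff_continuousAt.mpr fun r =>
        ((hnorm.integral_hasStrictDerivAt 0 r).hasDerivAt).continuousAt).continuousOn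
    · constructor
      · rw [intervalIntegral.integral_same]; linarith
      · linarith
  obtain ⟨s, hsmem, hsL⟩ := hivt
  have hsL : (∫ t in (0:ℝ)..s, ‖deriv c t‖) = (∫ t in (0:ℝ)..P, ‖deriv c t‖) / 2 := hsL
  have hπ : (∫ t in (0:ℝ)..P, ‖deriv c t‖) / 2 < π := by linarith
  have harc_pq : Real.arccos ⟪c 0, c s⟫_ℝ ≤ (∫ t in (0:ℝ)..P, ‖deriv c t‖) / 2 := by
    rw [← hsL]; exact lenA 0 s hsmem.1
  have hg : -1 < ⟪c 0, c s⟫_ℝ := by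
    rcases lt_or_eq_of_le (abs_le.mp (hCS 0 s)).1 with h | h
    · exact h
    · exfalso
      rw [← h, Real.arccos_neg_one] at harc_pq
      linarith
  have hN2 : ‖c 0 + c s‖ ^ 2 = 2 + 2 * ⟪c 0, c s⟫_ℝ := by
    rw [norm_add_sq_real, hsphere, hsphere]; ring
  have hNpos : 0 < ‖c 0 + c s‖ := by
    rcases (norm_nonneg (c 0 + c s)).lt_or_eq with h | h
    · exact h
    · exfalso
      rw [← h] at hN2
      linarith
  set N := ‖c 0 + c s‖ with hNdef
  refine ⟨N⁻¹ • (c 0 + c s), ?_, ?_⟩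
  · rw [norm_smul, Real.norm_eq_abs, abs_of_pos (inv_pos.mpr hNpos), ← hNdef,
      inv_mul_cancel₀ (ne_of_gt hNpos)]
  have hinner : ∀ x : EuclideanSpace ℝ (Fin n),
      ⟪x, N⁻¹ • (c 0 + c s)⟫_ℝ = N⁻¹ * (⟪x, c 0⟫_ℝ + ⟪x, c s⟫_ℝ) := by
    intro x; rw [real_inner_smul_right, inner_add_right]
  have hstart : 0 < ⟪c 0, N⁻¹ • (c 0 + c s)⟫_ℝ := by
    rw [hinner]
    have h1 : ⟪c 0, c 0⟫_ℝ = 1 := by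
      rw [real_inner_self_eq_norm_sq, hsphere]; norm_num
    have h2 : 0 < ⟪c 0, c 0⟫_ℝ + ⟪c 0, c s⟫_ℝ := by rw [h1]; linarith
    exact mul_pos (inv_pos.mpr hNpos) h2
  have hnz : ∀ t, t ∈ Icc (0:ℝ) P → ⟪c t, N⁻¹ • (c 0 + c s)⟫_ℝ ≠ 0 := by
    intro t ht h0
    have h1 := hinner (c t)
    rw [h0] at h1
    have hsum : ⟪c t, c 0⟫_ℝ + ⟪c t, c s⟫_ℝ = 0 := by
      rcases mul_eq_zero.mp h1.symm with h | h
      · exact absurd h (inv_ne_zero (ne_of_gt hNpos))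
      · exact h
    rcases le_total t s with hts | hst
    · have h1' : Real.arccos ⟪c 0, c t⟫_ℝ ≤ ∫ u in (0:ℝ)..t, ‖deriv c u‖ := lenA 0 t ht.1
      have h2' : Real.arccos ⟪c t, c s⟫_ℝ ≤ ∫ u in t..s, ‖deriv c u‖ := lenA t s hts
      have hadd : (∫ u in (0:ℝ)..t, ‖deriv c u‖) + (∫ u in t..s, ‖deriv c u‖) =
          ∫ u in (0:ℝ)..s, ‖deriv c u‖ :=
        intervalIntegral.integral_add_adjacent_intervals (hInt 0 t) (hInt t s)
      rw [show ⟪c 0, c t⟫_ℝ = ⟪c t, c 0⟫_ℝ from real_inner_comm _ _] at h1'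
      rw [show ⟪c t, c s⟫_ℝ = -⟪c t, c 0⟫_ℝ from by linarith, Real.arccos_neg] at h2'
      linarith
    · have h1' : Real.arccos ⟪c s, c t⟫_ℝ ≤ ∫ u in s..t, ‖deriv c u‖ := lenA s t hst
      have h2' : Real.arccos ⟪c t, c P⟫_ℝ ≤ ∫ u in t..P, ‖deriv c u‖ := lenA t P ht.2
      have hadd1 : (∫ u in s..t, ‖deriv c u‖) + (∫ u in t..P, ‖deriv c u‖) =
          ∫ u in s..P, ‖deriv c u‖ :=
        intervalIntegral.integral_add_adjacent_intervals (hInt s t) (hInt t P)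
      have hadd2 : (∫ u in (0:ℝ)..s, ‖deriv c u‖) + (∫ u in s..P, ‖deriv c u‖) =
          ∫ u in (0:ℝ)..P, ‖deriv c u‖ :=
        intervalIntegral.integral_add_adjacent_intervals (hInt 0 s) (hInt s P)
      have hcP : c P = c 0 := by simpa using hper 0
      rw [show ⟪c s, c t⟫_ℝ = ⟪c t, c s⟫_ℝ from real_inner_comm _ _] at h1'
      rw [hcP, show ⟪c t, c 0⟫_ℝ = -⟪c t, c s⟫_ℝ from by linarith, Real.arccos_neg] at h2'
      linarith
  have hposIcc : ∀ t, t ∈ Icc (0:ℝ) P → 0 < ⟪c t, N⁻¹ • (c 0 + c s)⟫_ℝ := by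
    intro t ht
    by_contra hle
    push_neg at hle
    have hlt : ⟪c t, N⁻¹ • (c 0 + c s)⟫_ℝ < 0 := lt_of_le_of_ne hle (hnz t ht)
    have hfc : ContinuousOn (fun u => ⟪c u, N⁻¹ • (c 0 + c s)⟫_ℝ) (Icc 0 t) :=
      (hc.continuous.inner continuous_const).continuousOn
    obtain ⟨u, hu, hu0⟩ := intermediate_value_Icc' ht.1 hfc ⟨hlt.le, hstart.le⟩
    exact hnz u ⟨hu.1, le_trans hu.2 ht.2⟩ hu0
  intro t
  have hmem := toIcoMod_mem_Ico' hP0 t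
  have heq : c (toIcoMod hP0 0 t) = c t := by
    rw [← self_sub_toIcoDiv_zsmul hP0 0 t]
    exact hper.sub_zsmul_eq _
  have := hposIcc (toIcoMod hP0 0 t) ⟨hmem.1, hmem.2.le⟩
  rwa [heq] at this
end

section
/- Let p, q ∈ S^{n-1} with geodesic distance d(p,q) < π, let m be the midpoint of the minimizing geodesic from p to q, and let z ∈ S^{n-1} satisfy ⟪z, m⟫ = 0. Then d(p,z) + d(z,q) ≥ π. -/
open scoped InnerProductSpace Real

/-- If `p, q` are non-antipodal points of the unit sphere, `m` is the midpoint of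
the minimizing geodesic from `p` to `q`, and `z` lies on the equatorial subsphere
`E_m`, then `d(p,z) + d(z,q) ≥ π` for the geodesic distance `d = arccos⟪·,·⟫`. -/
theorem stmt4 {n : ℕ} (p q z : EuclideanSpace ℝ (Fin n))
    (hp : ‖p‖ = 1) (hq : ‖q‖ = 1) (hz : ‖z‖ = 1)
    (hd : Real.arccos ⟪p, q⟫_ℝ < π)
    (hzm : ⟪z, (‖p + q‖)⁻¹ • (p + q)⟫_ℝ = 0) :
    π ≤ Real.arccos ⟪p, z⟫_ℝ + Real.arccos ⟪z, q⟫_ℝ := by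
  have hpq : p + q ≠ 0 := by
    intro h
    have hqp : q = -p := by
      have := congrArg (fun x => x - p) h
      simpa [add_sub_cancel_left, sub_eq_iff_eq_add] using this
    have hpp : ⟪p, p⟫_ℝ = 1 := by
      rw [real_inner_self_eq_norm_sq, hp]; norm_num
    rw [hqp, inner_neg_right, hpp, Real.arccos_neg_one] at hd
    exact lt_irrefl _ hd
  have hnorm : (‖p + q‖ : ℝ) ≠ 0 := by simpa using hpq
  have h0 : ⟪z, p + q⟫_ℝ = 0 := by
    have := hzm
    rw [real_inner_smul_right] at this
    exact (mul_eq_zero.mp this).resolve_left (inv_ne_zero hnorm)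
  have hsum : ⟪z, p⟫_ℝ + ⟪z, q⟫_ℝ = 0 := by
    rw [← inner_add_right]; exact h0
  have hpz : ⟪p, z⟫_ℝ = -⟪z, q⟫_ℝ := by
    rw [real_inner_comm]; linarith
  rw [hpz, Real.arccos_neg]
  linarith
end

section
/- Let C : ℝ → ℝⁿ be a smooth, 2π-periodic, unit-speed parameterization with ‖C''(t)‖ ≤ 1 for all t ∈ ℝ. Then C(ℝ) is a unit circle, i.e., there exists an isometry I of ℝⁿ such that C(ℝ) = I(S¹), where S¹ = {(cos t, sin t, 0, …, 0) : t ∈ ℝ}. -/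
open scoped Real

/-- The standard unit circle parameterization
`t ↦ (cos t, sin t, 0, …, 0)` in `ℝ^(n+2)`. -/
noncomputable def stdCircle (n : ℕ) (t : ℝ) : EuclideanSpace ℝ (Fin (n + 2)) :=
  EuclideanSpace.single (0 : Fin (n + 2)) (Real.cos t) +
    EuclideanSpace.single (1 : Fin (n + 2)) (Real.sin t)

open Real Filter Set

set_option maxHeartbeats 1000000


/-- Core ODE comparison: if `g(0)=1`, `g'^2 ≤ 1 - g^2`, and `g s ≥ 1 - s²/2`,
then `g s ≥ cos s` on `[0, π]`. -/
lemma comp_aux {g g' : ℝ → ℝ} (hg : ∀ s, HasDerivAt g (g' s) s)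
    (h0 : g 0 = 1) (hb : ∀ s, (g' s) ^ 2 ≤ 1 - (g s) ^ 2)
    (hq : ∀ s, 1 - s ^ 2 / 2 ≤ g s) :
    ∀ s ∈ Set.Icc (0:ℝ) π, Real.cos s ≤ g s := by
  have hgcont : Continuous g := by
    rw [continuous_iff_continuousAt]; exact fun s => (hg s).continuousAt
  have hgsq : ∀ s, g s ^ 2 ≤ 1 := fun s => by nlinarith [hb s, sq_nonneg (g' s)]
  -- Step 1: for every ε ∈ (0,1], g s ≥ cos ((1+ε)s) on [0, π/(1+ε)]
  have step1 : ∀ ε : ℝ, 0 < ε → ε ≤ 1 → ∀ s ∈ Set.Icc (0:ℝ) (π / (1+ε)),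
      Real.cos ((1+ε)*s) ≤ g s := by
    intro ε hε0 hε1
    by_contra hcon
    push_neg at hcon
    obtain ⟨s₀, hs₀mem, hs₀⟩ := hcon
    have hε1' : (0:ℝ) < 1 + ε := by linarith
    set T : Set ℝ := {s | s ∈ Set.Icc (0:ℝ) (π / (1+ε)) ∧ g s < Real.cos ((1+ε)*s)} with hT
    have hTne : T.Nonempty := ⟨s₀, hs₀mem, hs₀⟩
    have hTbdd : BddBelow T := ⟨0, fun x hx => hx.1.1⟩
    set s₁ := sInf T with hs₁
    set δ := min (1/2 : ℝ) (Real.sqrt ε / 3) with hδ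
    have hδpos : 0 < δ := lt_min (by norm_num) (by positivity)
    -- near 0, strict inequality g > cos((1+ε)·)
    have hpos : ∀ s : ℝ, 0 < s → s ≤ δ → Real.cos ((1+ε)*s) < g s := by
      intro s hs0 hsδ
      have hs12 : s ≤ 1/2 := hsδ.trans (min_le_left _ _)
      have hssq : s ^ 2 ≤ ε / 9 := by
        have h1 : s ≤ Real.sqrt ε / 3 := hsδ.trans (min_le_right _ _)
        have h2 : s ^ 2 ≤ (Real.sqrt ε / 3) ^ 2 := by
          apply pow_le_pow_left₀ hs0.le h1
        calc s ^ 2 ≤ (Real.sqrt ε / 3)^2 := h2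
          _ = Real.sqrt ε ^ 2 / 9 := by ring
          _ = ε / 9 := by rw [Real.sq_sqrt hε0.le]
      have habs : |(1+ε)*s| ≤ 1 := by
        rw [abs_of_nonneg (by positivity)]; nlinarith
      have hcb := Real.cos_bound habs
      have hub : Real.cos ((1+ε)*s) ≤ 1 - ((1+ε)*s)^2/2 + |(1+ε)*s|^4 * (5/96) :=
        by have := (abs_sub_le_iff.1 hcb).1; linarith
      have h4 : |(1+ε)*s|^4 = ((1+ε)*s)^4 := by
        rw [← abs_pow, abs_of_nonneg (by positivity)]
      rw [h4] at hub
      have hq' := hq s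
      have h2b : (1+ε)^2 ≤ 4 := by nlinarith
      have h16 : (1+ε)^4 ≤ 16 := by nlinarith [h2b, sq_nonneg (1+ε), sq_nonneg ((1+ε)^2 - 4)]
      have hsp : 0 < s^2 := by positivity
      have e1 : ((1+ε)*s)^4 = (1+ε)^4 * (s^2 * s^2) := by ring
      have e3 : s^2*s^2 ≤ (ε/9) * s^2 :=
        mul_le_mul_of_nonneg_right hssq (sq_nonneg s)
      have e4 : (1+ε)^4 * (s^2*s^2) ≤ 16 * ((ε/9) * s^2) := by
        have h40 : (0:ℝ) ≤ (1+ε)^4 := by positivity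
        calc (1+ε)^4 * (s^2*s^2) ≤ (1+ε)^4 * ((ε/9)*s^2) :=
              mul_le_mul_of_nonneg_left e3 h40
          _ ≤ 16 * ((ε/9)*s^2) := by
              have : (0:ℝ) ≤ (ε/9)*s^2 := by positivity
              exact mul_le_mul_of_nonneg_right h16 this
      have key : ((1+ε)*s)^4 * (5/96) < ((1+ε)^2 - 1) * s^2 / 2 := by
        rw [e1]
        have hεs : 0 < ε * s^2 := by positivity
        nlinarith [e4]
      nlinarith [hub, hq', key]
    have hTgt : ∀ x ∈ T, δ < x := by
      intro x hx
      rcases lt_or_ge δ x with h | h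
      · exact h
      exfalso
      rcases eq_or_lt_of_le hx.1.1 with h0' | h0'
      · have : g 0 < Real.cos ((1+ε)*0) := by rw [h0']; exact hx.2
        simp [h0] at this
      · exact absurd hx.2 (not_lt.2 (hpos x h0' h).le)
    have hs₁δ : δ ≤ s₁ := le_csInf hTne fun x hx => (hTgt x hx).le
    have hs₁pos : 0 < s₁ := lt_of_lt_of_le hδpos hs₁δ
    have hs₁le : ∀ x ∈ T, s₁ ≤ x := fun x hx => csInf_le hTbdd hx
    -- s₁ < π/(1+ε)
    have hs₁top : s₁ < π / (1+ε) := by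
      obtain ⟨x, hx⟩ := hTne
      have hxlt : x < π / (1+ε) := by
        rcases lt_or_eq_of_le hx.1.2 with h | h
        · exact h
        · exfalso
          have : (1+ε) * x = π := by rw [h]; field_simp
          have : Real.cos ((1+ε)*x) = -1 := by rw [this, Real.cos_pi]
          have hgx := hgsq x
          nlinarith [hx.2]
      exact lt_of_le_of_lt (hs₁le x hx) hxlt
    -- value at s₁
    have husub : ∀ s, HasDerivAt (fun u => g u - Real.cos ((1+ε)*u))
        (g' s + (1+ε) * Real.sin ((1+ε)*s)) s := by
      intro s
      have hlin : HasDerivAt (fun u : ℝ => (1+ε)*u) (1+ε) s := by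
        simpa using (hasDerivAt_id s).const_mul (1+ε)
      have hc : HasDerivAt (fun u : ℝ => Real.cos ((1+ε)*u))
          (-Real.sin ((1+ε)*s) * (1+ε)) s :=
        (Real.hasDerivAt_cos ((1+ε)*s)).comp s hlin
      have := (hg s).sub hc
      exact this.congr_deriv (by ring)
    set u : ℝ → ℝ := fun s => g s - Real.cos ((1+ε)*s) with hu
    have hucont : Continuous u := by fun_prop
    have hule : u s₁ ≤ 0 := by
      have h1 : s₁ ∈ closure T := csInf_mem_closure hTne hTbdd
      have h2 : closure T ⊆ {s | u s ≤ 0} :=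
        closure_minimal
          (fun x hx => le_of_lt (show u x < 0 from sub_neg.2 hx.2))
          (isClosed_le hucont continuous_const)
      exact h2 h1
    have huge : 0 ≤ u s₁ := by
      have hev : ∀ᶠ y in nhdsWithin s₁ (Set.Iio s₁), 0 ≤ u y := by
        have hmem : Set.Ioo 0 s₁ ∈ nhdsWithin s₁ (Set.Iio s₁) := by
          rw [mem_nhdsWithin]
          exact ⟨Set.Ioi 0, isOpen_Ioi, hs₁pos, fun x hx => ⟨hx.1, hx.2⟩⟩
        filter_upwards [hmem] with y hy
        by_contra hneg
        push_neg at hneg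
        have hyT : y ∈ T := ⟨⟨hy.1.le, hy.2.le.trans hs₁top.le⟩, by
          simpa [hu, sub_neg] using hneg⟩
        exact absurd (hs₁le y hyT) (not_le.2 hy.2)
      have htd : Filter.Tendsto u (nhdsWithin s₁ (Set.Iio s₁)) (nhds (u s₁)) :=
        (hucont.tendsto s₁).mono_left nhdsWithin_le_nhds
      exact ge_of_tendsto htd hev
    have hueq : u s₁ = 0 := le_antisymm hule huge
    -- derivative at s₁ is strictly positive
    set θ := (1+ε) * s₁ with hθ
    have hθ0 : 0 < θ := by positivity
    have hθπ : θ < π := by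
      rw [hθ]
      calc (1+ε) * s₁ < (1+ε) * (π / (1+ε)) := mul_lt_mul_of_pos_left hs₁top hε1'
        _ = π := by field_simp
    have hsinθ : 0 < Real.sin θ := Real.sin_pos_of_pos_of_lt_pi hθ0 hθπ
    have hgs₁ : g s₁ = Real.cos θ := by
      have : u s₁ = 0 := hueq
      simpa [hu, hθ, sub_eq_zero] using this
    have hd : 0 < g' s₁ + (1+ε) * Real.sin θ := by
      have hb' := hb s₁
      rw [hgs₁] at hb'
      have h1 : g' s₁ ^ 2 ≤ Real.sin θ ^ 2 := by
        have := Real.sin_sq_add_cos_sq θ; nlinarith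
      have h2 : -Real.sin θ ≤ g' s₁ := by
        nlinarith [h1, hsinθ, sq_nonneg (g' s₁ + Real.sin θ)]
      nlinarith [h2, hsinθ, hε0]
    -- contradiction via slope
    have hslope := (hasDerivAt_iff_tendsto_slope.1 (husub s₁))
    have hev2 : ∀ᶠ y in nhdsWithin s₁ {s₁}ᶜ, 0 < slope u s₁ y :=
      hslope (Ioi_mem_nhds hd)
    have hle' : nhdsWithin s₁ (Set.Iio s₁) ≤ nhdsWithin s₁ {s₁}ᶜ :=
      nhdsWithin_mono s₁ (fun y hy => ne_of_lt hy)
    have hev3 : ∀ᶠ y in nhdsWithin s₁ (Set.Iio s₁),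
        0 < slope u s₁ y ∧ y ∈ Set.Ioo 0 s₁ := by
      refine (hev2.filter_mono hle').and ?_
      rw [eventually_iff, mem_nhdsWithin]
      exact ⟨Set.Ioi 0, isOpen_Ioi, hs₁pos, fun x hx => ⟨hx.1, hx.2⟩⟩
    obtain ⟨y, hy1, hy2⟩ := hev3.exists
    have hylt : u y < 0 := by
      have hsl : slope u s₁ y = (u y - u s₁) / (y - s₁) := slope_def_field u s₁ y
      rw [hsl, hueq, sub_zero] at hy1
      have hyneg : y - s₁ < 0 := sub_neg.2 hy2.2
      have hne : y - s₁ ≠ 0 := ne_of_lt hyneg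
      have hrw : u y / (y - s₁) * (y - s₁) = u y := by field_simp
      have hmn := mul_neg_of_pos_of_neg hy1 hyneg
      rw [hrw] at hmn
      exact hmn
    have hyT : y ∈ T := ⟨⟨hy2.1.le, hy2.2.le.trans hs₁top.le⟩, by
      simpa [hu, sub_neg] using hylt⟩
    exact absurd (hs₁le y hyT) (not_le.2 hy2.2)
  -- Step 2: pass to the limit ε → 0⁺, first on [0, π)
  have step2 : ∀ s ∈ Set.Ico (0:ℝ) π, Real.cos s ≤ g s := by
    intro s hs
    obtain ⟨hsl0, hslπ⟩ := hs
    have hev : ∀ᶠ ε in nhdsWithin (0:ℝ) (Set.Ioi 0), Real.cos ((1+ε)*s) ≤ g s := by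
      have hmem : Set.Ioo (0:ℝ) (min 1 ((π - s)/(s+1))) ∈ nhdsWithin (0:ℝ) (Set.Ioi 0) := by
        rw [mem_nhdsWithin]
        refine ⟨Set.Iio (min 1 ((π - s)/(s+1))), isOpen_Iio, ?_, fun x hx => ⟨hx.2, hx.1⟩⟩
        have hA : (0:ℝ) < π - s := by linarith
        have hB : (0:ℝ) < s + 1 := by linarith
        exact lt_min one_pos (div_pos hA hB)
      filter_upwards [hmem] with ε hε
      have hε0 : 0 < ε := hε.1
      have hε1 : ε ≤ 1 := le_of_lt (lt_of_lt_of_le hε.2 (min_le_left _ _))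
      apply step1 ε hε0 hε1 s
      constructor
      · exact hsl0
      · rw [le_div_iff₀ (by linarith)]
        have h1 : ε < (π - s)/(s+1) := lt_of_lt_of_le hε.2 (min_le_right _ _)
        have h2 : ε * (s+1) < π - s := by
          rw [← lt_div_iff₀ (by linarith)]; exact h1
        nlinarith [hsl0, hε0]
    have htd : Filter.Tendsto (fun ε : ℝ => Real.cos ((1+ε)*s))
        (nhdsWithin (0:ℝ) (Set.Ioi 0)) (nhds (Real.cos s)) := by
      have hc : Continuous fun ε : ℝ => Real.cos ((1+ε)*s) := by fun_prop
      have := (hc.tendsto 0).mono_left (nhdsWithin_le_nhds (s := Set.Ioi (0:ℝ)))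
      simpa using this
    exact le_of_tendsto htd hev
  -- close up: the set where cos ≤ g is closed
  have hclosed : IsClosed {s : ℝ | Real.cos s ≤ g s} :=
    isClosed_le Real.continuous_cos hgcont
  intro s hs
  have hsub : Set.Icc (0:ℝ) π ⊆ {s : ℝ | Real.cos s ≤ g s} := by
    have h1 : closure (Set.Ico (0:ℝ) π) = Set.Icc 0 π := closure_Ico Real.pi_pos.ne
    rw [← h1]
    exact closure_minimal step2 hclosed
  exact hsub hs


section
variable {E : Type*} [NormedAddCommGroup E] [InnerProductSpace ℝ E]

/-- orthogonality of D and D' from constant norm -/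
lemma orth_of_unit {D D' : ℝ → E} (hD : ∀ s, HasDerivAt D (D' s) s)
    (hnorm : ∀ s, ‖D s‖ = 1) : ∀ s, (inner ℝ (D s) (D' s) : ℝ) = 0 := by
  intro s
  have h1 : HasDerivAt (fun u => (inner ℝ (D u) (D u) : ℝ))
      ((inner ℝ (D s) (D' s) : ℝ) + (inner ℝ (D' s) (D s) : ℝ)) s :=
    (hD s).inner ℝ (hD s)
  have h2 : (fun u => (inner ℝ (D u) (D u) : ℝ)) = fun _ => (1:ℝ) := by
    funext u
    rw [real_inner_self_eq_norm_sq, hnorm u]; norm_num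
  rw [h2] at h1
  have h4 := (hasDerivAt_const s (1:ℝ)).unique h1
  have h5 : (inner ℝ (D' s) (D s) : ℝ) = 0 := by
    rw [real_inner_comm (D' s) (D s)] at h4
    linarith
  rw [real_inner_comm]
  exact h5

/-- The basic lower bound `⟪D 0, D s⟫ ≥ cos s` on `[0, π]`. -/
lemma key0 {D D' : ℝ → E} (hD : ∀ s, HasDerivAt D (D' s) s)
    (hnorm : ∀ s, ‖D s‖ = 1) (hle : ∀ s, ‖D' s‖ ≤ 1) :
    ∀ s ∈ Set.Icc (0:ℝ) π, Real.cos s ≤ (inner ℝ (D 0) (D s) : ℝ) := by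
  have horth := orth_of_unit hD hnorm
  -- Lipschitz bound
  have hlip : ∀ a b : ℝ, ‖D b - D a‖ ≤ |b - a| := by
    have hl : LipschitzWith 1 D := by
      apply lipschitzWith_of_nnnorm_deriv_le (fun s => (hD s).differentiableAt)
      intro x
      rw [(hD x).deriv]
      exact_mod_cast hle x
    intro a b
    have := hl.dist_le_mul b a
    simpa [dist_eq_norm, Real.dist_eq] using this
  set g : ℝ → ℝ := fun s => (inner ℝ (D 0) (D s) : ℝ) with hgdef
  set g' : ℝ → ℝ := fun s => (inner ℝ (D 0) (D' s) : ℝ) with hg'def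
  have hg : ∀ s, HasDerivAt g (g' s) s := by
    intro s
    have := (hasDerivAt_const s (D 0)).inner ℝ (hD s)
    simpa [hgdef, hg'def] using this
  have h0 : g 0 = 1 := by
    simp only [hgdef]
    rw [real_inner_self_eq_norm_sq, hnorm 0]; norm_num
  have hb : ∀ s, (g' s) ^ 2 ≤ 1 - (g s) ^ 2 := by
    intro s
    set w : E := D 0 - g s • D s with hw
    have h1 : (inner ℝ w (D' s) : ℝ) = g' s := by
      rw [hw, inner_sub_left, real_inner_smul_left, horth s]
      simp [hg'def]
    have h2 : ‖w‖ ^ 2 = 1 - g s ^ 2 := by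
      rw [hw, norm_sub_sq_real, real_inner_smul_right, norm_smul]
      rw [hnorm 0, hnorm s]
      have : (inner ℝ (D 0) (D s) : ℝ) = g s := rfl
      rw [this]
      simp [sq_abs]
      ring
    have h3 : |(inner ℝ w (D' s) : ℝ)| ≤ ‖w‖ := by
      calc |(inner ℝ w (D' s) : ℝ)| ≤ ‖w‖ * ‖D' s‖ := abs_real_inner_le_norm w (D' s)
        _ ≤ ‖w‖ * 1 := mul_le_mul_of_nonneg_left (hle s) (norm_nonneg w)
        _ = ‖w‖ := mul_one _
    calc (g' s) ^ 2 = |(inner ℝ w (D' s) : ℝ)| ^ 2 := by rw [h1, sq_abs]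
      _ ≤ ‖w‖ ^ 2 := pow_le_pow_left₀ (abs_nonneg _) h3 2
      _ = 1 - g s ^ 2 := h2
  have hq : ∀ s, 1 - s ^ 2 / 2 ≤ g s := by
    intro s
    have h1 : ‖D s - D 0‖ ≤ |s| := by simpa using hlip 0 s
    have h2 : ‖D s - D 0‖ ^ 2 ≤ s ^ 2 := by
      calc ‖D s - D 0‖ ^ 2 ≤ |s| ^ 2 := pow_le_pow_left₀ (norm_nonneg _) h1 2
        _ = s ^ 2 := sq_abs s
    have h3 : ‖D s - D 0‖ ^ 2 = 2 - 2 * g s := by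
      rw [norm_sub_sq_real, hnorm s, hnorm 0]
      have : (inner ℝ (D s) (D 0) : ℝ) = g s := real_inner_comm _ _
      rw [this]; ring
    linarith
  exact comp_aux hg h0 hb hq

/-- Full equality: under periodicity plus vanishing integrals,
`⟪D t, D s⟫ = cos (s - t)` for all `s, t`. -/
lemma key_eq {D D' : ℝ → E} (hD : ∀ s, HasDerivAt D (D' s) s)
    (hnorm : ∀ s, ‖D s‖ = 1) (hle : ∀ s, ‖D' s‖ ≤ 1)
    (hper : Function.Periodic D (2 * π))
    (hint : ∀ t : ℝ, (∫ s in (t - π)..(t + π), (inner ℝ (D t) (D s) : ℝ)) = 0) :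
    ∀ t s : ℝ, (inner ℝ (D t) (D s) : ℝ) = Real.cos (s - t) := by
  have hDcont : Continuous D := by
    rw [continuous_iff_continuousAt]; exact fun s => (hD s).continuousAt
  intro t
  -- plus direction
  have hplus : ∀ s ∈ Set.Icc (0:ℝ) π, Real.cos s ≤ (inner ℝ (D t) (D (t + s)) : ℝ) := by
    have h := key0 (D := fun s => D (t + s)) (D' := fun s => D' (t + s))
      (fun s => by
        have h1 : HasDerivAt (fun u : ℝ => t + u) 1 s := by
          simpa using (hasDerivAt_id s).const_add t
        simpa [Function.comp_def] using (hD (t + s)).scomp s h1)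
      (fun s => hnorm _) (fun s => hle _)
    simpa using h
  have hminus : ∀ s ∈ Set.Icc (0:ℝ) π, Real.cos s ≤ (inner ℝ (D t) (D (t - s)) : ℝ) := by
    have h := key0 (D := fun s => D (t - s)) (D' := fun s => -D' (t - s))
      (fun s => by
        have h1 : HasDerivAt (fun u : ℝ => t - u) (-1) s := by
          simpa using (hasDerivAt_id s).const_sub t
        have := (hD (t - s)).scomp s h1
        simpa [Function.comp_def] using this)
      (fun s => hnorm _) (fun s => by simpa using hle (t - s))
    simpa using h
  have hge : ∀ s ∈ Set.Icc (-π) π, Real.cos s ≤ (inner ℝ (D t) (D (t + s)) : ℝ) := by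
    intro s hs
    rcases le_or_gt 0 s with h | h
    · exact hplus s ⟨h, hs.2⟩
    · have h1 := hminus (-s) ⟨by linarith, by linarith [hs.1]⟩
      rw [Real.cos_neg] at h1
      simpa [sub_neg_eq_add] using h1
  -- integrals
  have hgcont : Continuous fun s => (inner ℝ (D t) (D (t + s)) : ℝ) := by
    have h1 : Continuous fun s : ℝ => D (t + s) :=
      hDcont.comp (continuous_const.add continuous_id)
    exact continuous_const.inner h1
  have hI1 : (∫ s in (-π)..π, (inner ℝ (D t) (D (t + s)) : ℝ)) = 0 := by
    have h := intervalIntegral.integral_comp_add_left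
      (a := -π) (b := π) (fun s => (inner ℝ (D t) (D s) : ℝ)) t
    rw [h]
    have e1 : t + -π = t - π := by ring
    have e2 : t + π = t + π := rfl
    rw [e1]
    exact hint t
  have hI2 : (∫ s in (-π)..π, Real.cos s) = 0 := by
    rw [integral_cos]; simp
  -- equality on [-π, π]
  have heqIcc : ∀ s ∈ Set.Icc (-π) π, (inner ℝ (D t) (D (t + s)) : ℝ) = Real.cos s := by
    by_contra hcon
    push_neg at hcon
    obtain ⟨s₀, hs₀, hne⟩ := hcon
    have hlt : Real.cos s₀ < (inner ℝ (D t) (D (t + s₀)) : ℝ) :=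
      lt_of_le_of_ne (hge s₀ hs₀) (Ne.symm hne)
    have := intervalIntegral.integral_lt_integral_of_continuousOn_of_le_of_exists_lt
      (f := Real.cos) (g := fun s => (inner ℝ (D t) (D (t + s)) : ℝ))
      (a := -π) (b := π) (by linarith [Real.pi_pos])
      Real.continuous_cos.continuousOn hgcont.continuousOn
      (fun x hx => hge x ⟨hx.1.le, hx.2⟩) ⟨s₀, hs₀, hlt⟩
    rw [hI1, hI2] at this
    exact lt_irrefl 0 this
  -- extend by periodicity
  intro s
  set F : ℝ → ℝ := fun s => (inner ℝ (D t) (D s) : ℝ) - Real.cos (s - t) with hF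
  have hFper : Function.Periodic F (2 * π) := by
    intro x
    simp only [hF]
    rw [hper x]
    have : x + 2 * π - t = (x - t) + 2 * π := by ring
    rw [this, Real.cos_add_two_pi]
  have hFzero : ∀ y ∈ Set.Ico (t - π) (t - π + (2 * π)), F y = 0 := by
    intro y hy
    have h1 : y - t ∈ Set.Icc (-π) π := ⟨by linarith [hy.1], by linarith [hy.2]⟩
    have h2 := heqIcc (y - t) h1
    have h3 : t + (y - t) = y := by ring
    rw [h3] at h2
    simp only [hF]
    rw [h2]; ring
  obtain ⟨y, hy, hFy⟩ := hFper.exists_mem_Ico (by positivity) s (t - π)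
  have : F s = 0 := by rw [hFy]; exact hFzero y hy
  simpa [hF, sub_eq_zero] using this

end

/-- A `2π`-periodic unit-speed curve in `ℝ^(n+2)` with `‖C''‖ ≤ 1` is a unit
circle: its image is the image of the standard circle `S¹` under some isometry
of Euclidean space. -/
theorem stmt8 {n : ℕ} (C : ℝ → EuclideanSpace ℝ (Fin (n + 2)))
    (hC : ContDiff ℝ (⊤ : ℕ∞) C)
    (hspeed : ∀ t, ‖deriv C t‖ = 1)
    (hper : IsLeastPeriod C (2 * π))
    (hacc : ∀ t, ‖deriv (deriv C) t‖ ≤ 1) :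
    ∃ I : EuclideanSpace ℝ (Fin (n + 2)) ≃ᵢ EuclideanSpace ℝ (Fin (n + 2)),
      Set.range C = I '' Set.range (stdCircle n) := by
  obtain ⟨-, hperC, -⟩ := hper
  have hC' : ContDiff ℝ ((⊤ : ℕ∞) : WithTop ℕ∞) C := hC.of_le (by simp)
  have hdiff : Differentiable ℝ C := hC'.differentiable (by simp)
  have hD1 := (contDiff_infty_iff_deriv.mp hC').2
  have hDdiff : Differentiable ℝ (deriv C) := hD1.differentiable (by simp)
  set D := deriv C with hDdef
  set D' := deriv D with hD'def
  have hD : ∀ s, HasDerivAt D (D' s) s := fun s => (hDdiff s).hasDerivAt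
  have hCD : ∀ s, HasDerivAt C (D s) s := fun s => (hdiff s).hasDerivAt
  have hnorm : ∀ s, ‖D s‖ = 1 := hspeed
  have hle : ∀ s, ‖D' s‖ ≤ 1 := hacc
  have hDcont : Continuous D := hDdiff.continuous
  have hDper : Function.Periodic D (2 * π) := by
    intro x
    have h1 : deriv (fun y => C (y + 2 * π)) x = deriv C (x + 2 * π) :=
      deriv_comp_add_const C (2 * π) x
    have h2 : (fun y => C (y + 2 * π)) = C := funext fun y => hperC y
    rw [hDdef, ← h1, h2]
  have hint : ∀ t : ℝ, (∫ s in (t - π)..(t + π), (inner ℝ (D t) (D s) : ℝ)) = 0 := by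
    intro t
    have hderiv : ∀ s ∈ Set.uIcc (t - π) (t + π),
        HasDerivAt (fun u => (inner ℝ (D t) (C u) : ℝ)) ((inner ℝ (D t) (D s) : ℝ)) s :=
      fun s _ => by simpa using (hasDerivAt_const s (D t)).inner ℝ (hCD s)
    have hcont : IntervalIntegrable (fun s => (inner ℝ (D t) (D s) : ℝ))
        MeasureTheory.volume (t - π) (t + π) :=
      (continuous_const.inner hDcont).intervalIntegrable _ _
    rw [intervalIntegral.integral_eq_sub_of_hasDerivAt hderiv hcont]
    have hCeq : C (t + π) = C (t - π) := by
      have h := hperC (t - π)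
      rw [show t - π + 2 * π = t + π by ring] at h
      exact h
    rw [hCeq, sub_self]
  have hcos := key_eq hD hnorm hle hDper hint
  set e₁ := D 0 with he₁
  set e₂ := D (π/2) with he₂
  have h11 : (inner ℝ e₁ e₁ : ℝ) = 1 := by
    rw [real_inner_self_eq_norm_sq, hnorm]; norm_num
  have h22 : (inner ℝ e₂ e₂ : ℝ) = 1 := by
    rw [real_inner_self_eq_norm_sq, hnorm]; norm_num
  have h12 : (inner ℝ e₁ e₂ : ℝ) = 0 := by
    have h := hcos 0 (π/2)
    rw [sub_zero, Real.cos_pi_div_two] at h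
    exact h
  have hDs1 : ∀ s, (inner ℝ e₁ (D s) : ℝ) = Real.cos s := fun s => by
    have h := hcos 0 s; rwa [sub_zero] at h
  have hDs2 : ∀ s, (inner ℝ e₂ (D s) : ℝ) = Real.sin s := fun s => by
    have h := hcos (π/2) s
    rwa [Real.cos_sub_pi_div_two] at h
  have hD_eq : ∀ s, D s = Real.cos s • e₁ + Real.sin s • e₂ := by
    intro s
    have hDD : (inner ℝ (D s) (D s) : ℝ) = 1 := by
      rw [real_inner_self_eq_norm_sq, hnorm]; norm_num
    have c1 := hDs1 s
    have c2 := hDs2 s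
    have c1' : (inner ℝ (D s) e₁ : ℝ) = Real.cos s := by rw [real_inner_comm]; exact c1
    have c2' : (inner ℝ (D s) e₂ : ℝ) = Real.sin s := by rw [real_inner_comm]; exact c2
    have h21 : (inner ℝ e₂ e₁ : ℝ) = 0 := by rw [real_inner_comm]; exact h12
    have hx : (inner ℝ (D s - (Real.cos s • e₁ + Real.sin s • e₂))
        (D s - (Real.cos s • e₁ + Real.sin s • e₂)) : ℝ) = 0 := by
      simp only [inner_sub_left, inner_sub_right, inner_add_left, inner_add_right,
        real_inner_smul_left, real_inner_smul_right, hDD, c1, c2, c1', c2', h11, h22,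
        h12, h21]
      nlinarith [Real.sin_sq_add_cos_sq s]
    exact sub_eq_zero.mp (inner_self_eq_zero.mp hx)
  have hC_eq : ∀ t, C t = C 0 + (Real.sin t • e₁ + (1 - Real.cos t) • e₂) := by
    have hG : ∀ t, HasDerivAt
        (fun u => C u - (Real.sin u • e₁ + (1 - Real.cos u) • e₂)) 0 t := by
      intro t
      have h1 : HasDerivAt (fun u : ℝ => Real.sin u • e₁) (Real.cos t • e₁) t :=
        (Real.hasDerivAt_sin t).smul_const e₁
      have h2 : HasDerivAt (fun u : ℝ => (1 - Real.cos u) • e₂) (Real.sin t • e₂) t := by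
        have h := ((hasDerivAt_const t (1:ℝ)).sub (Real.hasDerivAt_cos t)).smul_const e₂
        simpa using h
      have h3 := (hCD t).sub (h1.add h2)
      rw [hD_eq t] at h3
      exact h3.congr_deriv (by simp)
    intro t
    have hconst := is_const_of_deriv_eq_zero
      (f := fun u => C u - (Real.sin u • e₁ + (1 - Real.cos u) • e₂))
      (fun u => (hG u).differentiableAt) (fun u => (hG u).deriv) t 0
    simp only [Real.sin_zero, Real.cos_zero, sub_self, zero_smul, add_zero, zero_add,
      sub_zero] at hconst
    -- hconst : C t - (sin t • e₁ + (1 - cos t) • e₂) = C 0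
    rw [← hconst]
    abel
  -- the isometry
  set p := C 0 + e₂ with hp
  set f₁ := -e₂ with hf₁
  set f₂ := e₁ with hf₂
  have hC_eq' : ∀ t, C t = Real.cos t • f₁ + Real.sin t • f₂ + p := by
    intro t
    rw [hC_eq t, hf₁, hf₂, hp]
    rw [smul_neg, sub_smul, one_smul]
    abel
  -- orthonormal family
  have hf11 : (inner ℝ f₁ f₁ : ℝ) = 1 := by rw [hf₁, inner_neg_neg]; exact h22
  have hf22 : (inner ℝ f₂ f₂ : ℝ) = 1 := h11
  have hf12 : (inner ℝ f₁ f₂ : ℝ) = 0 := by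
    rw [hf₁, inner_neg_left]
    rw [real_inner_comm]
    rw [h12]; ring
  have hf21 : (inner ℝ f₂ f₁ : ℝ) = 0 := by
    rw [real_inner_comm]; exact hf12
  classical
  set v : Fin (n + 2) → EuclideanSpace ℝ (Fin (n + 2)) :=
    fun i => if i = 0 then f₁ else if i = 1 then f₂ else 0 with hv
  have hne01 : (0 : Fin (n + 2)) ≠ 1 := by
    intro h
    have := congrArg Fin.val h
    simp at this
  have horthv : Orthonormal ℝ (Set.restrict ({0, 1} : Set (Fin (n+2))) v) := by
    rw [orthonormal_iff_ite]
    rintro ⟨i, hi⟩ ⟨j, hj⟩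
    simp only [Set.mem_insert_iff, Set.mem_singleton_iff] at hi hj
    rcases hi with rfl | rfl <;> rcases hj with rfl | rfl <;>
      simp [Set.restrict, (by rw [norm_eq_sqrt_real_inner, hf11]; simp : ‖f₁‖ = 1), (by rw [norm_eq_sqrt_real_inner, hf22]; simp : ‖f₂‖ = 1), hv, hne01, hne01.symm, hf11, hf22, hf12, hf21, Subtype.mk_eq_mk]
  have hcard : Module.finrank ℝ (EuclideanSpace ℝ (Fin (n+2))) = Fintype.card (Fin (n+2)) := by
    simp [finrank_euclideanSpace]
  obtain ⟨b, hb⟩ := horthv.exists_orthonormalBasis_extension_of_card_eq hcard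
  have hb0 : b 0 = f₁ := by
    have h := hb 0 (by simp)
    simpa [hv] using h
  have hb1 : b 1 = f₂ := by
    have h := hb 1 (by simp)
    simpa [hv, hne01.symm] using h
  set L := b.repr.symm with hL
  have hsingle : ∀ (i : Fin (n+2)) (c : ℝ),
      EuclideanSpace.single i c = c • EuclideanSpace.single i (1:ℝ) := by
    intro i c
    ext j
    by_cases h : j = i <;> simp [EuclideanSpace.single_apply, h]
  have hLstd : ∀ t, L (stdCircle n t) = Real.cos t • f₁ + Real.sin t • f₂ := by
    intro t
    rw [stdCircle, map_add, hsingle 0, hsingle 1, map_smul, map_smul, hL,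
      OrthonormalBasis.repr_symm_single, OrthonormalBasis.repr_symm_single, hb0, hb1]
  refine ⟨(L.toIsometryEquiv).trans (IsometryEquiv.vaddConst p), ?_⟩
  have hIC : ∀ t, ((L.toIsometryEquiv).trans (IsometryEquiv.vaddConst p)) (stdCircle n t) = C t := by
    intro t
    rw [IsometryEquiv.trans_apply]
    have h1 : (L.toIsometryEquiv) (stdCircle n t) = L (stdCircle n t) := rfl
    have h2 : ∀ x : EuclideanSpace ℝ (Fin (n+2)), (IsometryEquiv.vaddConst p) x = x + p := by
      intro x; rfl
    rw [h1, h2, hLstd t, hC_eq' t]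
  rw [← Set.range_comp]
  have : ((L.toIsometryEquiv).trans (IsometryEquiv.vaddConst p)) ∘ (stdCircle n) = C :=
    funext fun t => hIC t
  rw [this]
end
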